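/- arXiv:1505.05532 — 2 statements merged into one kernel-verified Lean document; each statement's English description precedes it below -/
import Mathlib

section
/- Let A be a monoid in C, V an object of C, and ψ:V⊗A→A⊗V a morphism satisfying the measuring condition (μ_A⊗V)∘(A⊗ψ)∘(ψ⊗A)=ψ∘(V⊗μ_A). Then the morphism ∇_{A⊗V}=(μ_A⊗V)∘(A⊗ψ)∘(A⊗V⊗η_A):A⊗V→A⊗V is idempotent, i.e. ∇_{A⊗V}∘∇_{A⊗V}=∇_{A⊗V}. -/
/-!
Write `∇ = (μ_A ⊗ V) ∘ (A ⊗ γ)` with `γ = ψ ∘ (V ⊗ η_A)`. Associativity of `μ_A` gives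
`∇ ∘ ∇ = (μ_A ⊗ V) ∘ (A ⊗ (∇ ∘ γ))`, and the measuring condition followed by the right unit
law gives `∇ ∘ ψ = ψ`, hence `∇ ∘ γ = γ`.
-/

open CategoryTheory MonoidalCategory

universe v u

namespace WeakCrossed

variable {C : Type u} [Category.{v} C] [MonoidalCategory C]

/-- The monoid axioms for a triple `(A, η, μ)` in a monoidal category. -/
def IsMon (A : C) (eta : 𝟙_ C ⟶ A) (mu : A ⊗ A ⟶ A) : Prop :=
  (eta ▷ A) ≫ mu = (λ_ A).hom ∧ (A ◁ eta) ≫ mu = (ρ_ A).hom ∧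
    (mu ▷ A) ≫ mu = (α_ A A A).hom ≫ (A ◁ mu) ≫ mu

/-- The morphism `(μ_A ⊗ Y) ∘ (A ⊗ f) : (A ⊗ X) ⊗ Z ⟶ A ⊗ Y` for `f : X ⊗ Z ⟶ A ⊗ Y`. -/
def phi (A : C) {X Z Y : C} (mu : A ⊗ A ⟶ A) (f : X ⊗ Z ⟶ A ⊗ Y) :
    (A ⊗ X) ⊗ Z ⟶ A ⊗ Y :=
  (α_ A X Z).hom ≫ (A ◁ f) ≫ (α_ A A Y).inv ≫ (mu ▷ Y)

/-- The measuring condition `(μ_A ⊗ V) ∘ (A ⊗ ψ) ∘ (ψ ⊗ A) = ψ ∘ (V ⊗ μ_A)`. -/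
def Measuring (A V : C) (mu : A ⊗ A ⟶ A) (psi : V ⊗ A ⟶ A ⊗ V) : Prop :=
  (psi ▷ A) ≫ phi A mu psi = (α_ V A A).hom ≫ (V ◁ mu) ≫ psi

/-- The idempotent `∇_{A⊗V} = (μ_A ⊗ V) ∘ (A ⊗ ψ) ∘ (A ⊗ V ⊗ η_A)`. -/
def nabla (A V : C) (eta : 𝟙_ C ⟶ A) (mu : A ⊗ A ⟶ A) (psi : V ⊗ A ⟶ A ⊗ V) :
    A ⊗ V ⟶ A ⊗ V :=
  (ρ_ (A ⊗ V)).inv ≫ ((A ⊗ V) ◁ eta) ≫ phi A mu psi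

/-- The twisted condition
`(μ_A ⊗ V) ∘ (A ⊗ ψ) ∘ (σ ⊗ A) = (μ_A ⊗ V) ∘ (A ⊗ σ) ∘ (ψ ⊗ V) ∘ (V ⊗ ψ)`. -/
def Twisted (A V : C) (mu : A ⊗ A ⟶ A) (psi : V ⊗ A ⟶ A ⊗ V)
    (sig : V ⊗ V ⟶ A ⊗ V) : Prop :=
  (sig ▷ A) ≫ phi A mu psi =
    (α_ V V A).hom ≫ (V ◁ psi) ≫ (α_ V A V).inv ≫ (psi ▷ V) ≫ phi A mu sig

/-- The cocycle condition
`(μ_A ⊗ V) ∘ (A ⊗ σ) ∘ (σ ⊗ V) = (μ_A ⊗ V) ∘ (A ⊗ σ) ∘ (ψ ⊗ V) ∘ (V ⊗ σ)`. -/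
def Cocycle (A V : C) (mu : A ⊗ A ⟶ A) (psi : V ⊗ A ⟶ A ⊗ V)
    (sig : V ⊗ V ⟶ A ⊗ V) : Prop :=
  (sig ▷ V) ≫ phi A mu sig =
    (α_ V V V).hom ≫ (V ◁ sig) ≫ (α_ V A V).inv ≫ (psi ▷ V) ≫ phi A mu sig

/-- The weak crossed product multiplication
`μ_{A⊗V} = (μ_A ⊗ V) ∘ (μ_A ⊗ σ) ∘ (A ⊗ ψ ⊗ V)`. -/
def prodAV (A V : C) (mu : A ⊗ A ⟶ A) (psi : V ⊗ A ⟶ A ⊗ V)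
    (sig : V ⊗ V ⟶ A ⊗ V) : (A ⊗ V) ⊗ (A ⊗ V) ⟶ A ⊗ V :=
  (α_ A V (A ⊗ V)).hom ≫ (A ◁ ((α_ V A V).inv ≫ (psi ▷ V) ≫ (α_ A V V).hom)) ≫
    (α_ A A (V ⊗ V)).inv ≫ (mu ⊗ₘ sig) ≫ (α_ A A V).inv ≫ (mu ▷ V)

/-- The morphism `η_A ⊗ V : V ⟶ A ⊗ V`. -/
def etaT (A V : C) (eta : 𝟙_ C ⟶ A) : V ⟶ A ⊗ V := (λ_ V).inv ≫ (eta ▷ V)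

/-- The morphism `β_ν = (μ_A ⊗ V) ∘ (A ⊗ ν) : A ⟶ A ⊗ V`. -/
def beta (A V : C) (mu : A ⊗ A ⟶ A) (nu : 𝟙_ C ⟶ A ⊗ V) : A ⟶ A ⊗ V :=
  (ρ_ A).inv ≫ (A ◁ nu) ≫ (α_ A A V).inv ≫ (mu ▷ V)

/-- Preunit condition (pre1):
`(μ_A ⊗ V) ∘ (A ⊗ σ) ∘ (ψ ⊗ V) ∘ (V ⊗ ν) = ∇_{A⊗V} ∘ (η_A ⊗ V)`. -/
def Pre1 (A V : C) (eta : 𝟙_ C ⟶ A) (mu : A ⊗ A ⟶ A) (psi : V ⊗ A ⟶ A ⊗ V)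
    (sig : V ⊗ V ⟶ A ⊗ V) (nu : 𝟙_ C ⟶ A ⊗ V) : Prop :=
  (ρ_ V).inv ≫ (V ◁ nu) ≫ (α_ V A V).inv ≫ (psi ▷ V) ≫ phi A mu sig =
    etaT A V eta ≫ nabla A V eta mu psi

/-- Preunit condition (pre2):
`(μ_A ⊗ V) ∘ (A ⊗ σ) ∘ (ν ⊗ V) = ∇_{A⊗V} ∘ (η_A ⊗ V)`. -/
def Pre2 (A V : C) (eta : 𝟙_ C ⟶ A) (mu : A ⊗ A ⟶ A) (psi : V ⊗ A ⟶ A ⊗ V)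
    (sig : V ⊗ V ⟶ A ⊗ V) (nu : 𝟙_ C ⟶ A ⊗ V) : Prop :=
  (λ_ V).inv ≫ (nu ▷ V) ≫ phi A mu sig = etaT A V eta ≫ nabla A V eta mu psi

/-- Preunit condition (pre3): `(μ_A ⊗ V) ∘ (A ⊗ ψ) ∘ (ν ⊗ A) = β_ν`. -/
def Pre3 (A V : C) (mu : A ⊗ A ⟶ A) (psi : V ⊗ A ⟶ A ⊗ V)
    (nu : 𝟙_ C ⟶ A ⊗ V) : Prop :=
  (λ_ A).inv ≫ (nu ▷ A) ≫ phi A mu psi = beta A V mu nu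

/-- `(A ⊗ V, μ_{A⊗V})` is a weak crossed product: measuring, twisted and cocycle
conditions hold and `∇_{A⊗V} ∘ σ = σ`. -/
def WCP (A V : C) (eta : 𝟙_ C ⟶ A) (mu : A ⊗ A ⟶ A) (psi : V ⊗ A ⟶ A ⊗ V)
    (sig : V ⊗ V ⟶ A ⊗ V) : Prop :=
  Measuring A V mu psi ∧ Twisted A V mu psi sig ∧ Cocycle A V mu psi sig ∧
    sig ≫ nabla A V eta mu psi = sig

/-- `(A ⊗ V, μ_{A⊗V})` is a weak crossed product with preunit `ν`. -/
def WCPpre (A V : C) (eta : 𝟙_ C ⟶ A) (mu : A ⊗ A ⟶ A) (psi : V ⊗ A ⟶ A ⊗ V)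
    (sig : V ⊗ V ⟶ A ⊗ V) (nu : 𝟙_ C ⟶ A ⊗ V) : Prop :=
  WCP A V eta mu psi sig ∧ Pre1 A V eta mu psi sig nu ∧
    Pre2 A V eta mu psi sig nu ∧ Pre3 A V mu psi nu

/-- `(μ_A ⊗ Y) ∘ (A ⊗ γ) : A ⊗ X ⟶ A ⊗ Y` for `γ : X ⟶ A ⊗ Y`. -/
def tmap (A : C) {X Y : C} (mu : A ⊗ A ⟶ A) (g : X ⟶ A ⊗ Y) : A ⊗ X ⟶ A ⊗ Y :=
  (A ◁ g) ≫ (α_ A A Y).inv ≫ (mu ▷ Y)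

/-- Left `A`-linearity of `T : A ⊗ X ⟶ A ⊗ Y`:
`T ∘ (μ_A ⊗ X) = (μ_A ⊗ Y) ∘ (A ⊗ T)`. -/
def LeftLin (A : C) {X Y : C} (mu : A ⊗ A ⟶ A) (T : A ⊗ X ⟶ A ⊗ Y) : Prop :=
  (mu ▷ X) ≫ T = (α_ A A X).hom ≫ (A ◁ T) ≫ (α_ A A Y).inv ≫ (mu ▷ Y)

/-- `ν` is a preunit for the associative product `m` on `X`. -/
def IsPreunit {X : C} (m : X ⊗ X ⟶ X) (nu : 𝟙_ C ⟶ X) : Prop :=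
  (ρ_ X).inv ≫ (X ◁ nu) ≫ m = (λ_ X).inv ≫ (nu ▷ X) ≫ m ∧
  (ρ_ X).inv ≫ (X ◁ nu) ≫ m =
    (ρ_ X).inv ≫ (X ◁ ((λ_ (𝟙_ C)).inv ≫ (nu ⊗ₘ nu) ≫ m)) ≫ m

/-- Brzeziński normalization conditions: `ψ ∘ (η_V ⊗ A) = A ⊗ η_V`,
`ψ ∘ (V ⊗ η_A) = η_A ⊗ V`, `σ ∘ (η_V ⊗ V) = σ ∘ (V ⊗ η_V) = η_A ⊗ V`. -/
def BrzNorm (A V : C) (eta : 𝟙_ C ⟶ A) (etaV : 𝟙_ C ⟶ V) (psi : V ⊗ A ⟶ A ⊗ V)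
    (sig : V ⊗ V ⟶ A ⊗ V) : Prop :=
  (λ_ A).inv ≫ (etaV ▷ A) ≫ psi = (ρ_ A).inv ≫ (A ◁ etaV) ∧
  (ρ_ V).inv ≫ (V ◁ eta) ≫ psi = (λ_ V).inv ≫ (eta ▷ V) ∧
  (λ_ V).inv ≫ (etaV ▷ V) ≫ sig = (λ_ V).inv ≫ (eta ▷ V) ∧
  (ρ_ V).inv ≫ (V ◁ etaV) ≫ sig = (λ_ V).inv ≫ (eta ▷ V)

lemma tmap_comp_tmap (A : C) {X Y Z : C} (mu : A ⊗ A ⟶ A)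
    (hassoc : (mu ▷ A) ≫ mu = (α_ A A A).hom ≫ (A ◁ mu) ≫ mu)
    (g : X ⟶ A ⊗ Y) (g' : Y ⟶ A ⊗ Z) :
    tmap A mu g ≫ tmap A mu g' = tmap A mu (g ≫ tmap A mu g') := by
  simp only [tmap, MonoidalCategory.whiskerLeft_comp, Category.assoc]
  rw [← whisker_exchange_assoc, associator_inv_naturality_left_assoc, ← comp_whiskerRight,
    hassoc]
  simp only [comp_whiskerRight, Category.assoc, whisker_assoc]
  monoidal

lemma nabla_eq_tmap (A V : C) (eta : 𝟙_ C ⟶ A) (mu : A ⊗ A ⟶ A) (psi : V ⊗ A ⟶ A ⊗ V) :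
    nabla A V eta mu psi = tmap A mu ((ρ_ V).inv ≫ (V ◁ eta) ≫ psi) := by
  simp only [nabla, tmap, phi, MonoidalCategory.whiskerLeft_comp, ← Category.assoc]
  congr 2
  monoidal

lemma psi_comp_nabla (A V : C) (eta : 𝟙_ C ⟶ A) (mu : A ⊗ A ⟶ A)
    (hunit : (A ◁ eta) ≫ mu = (ρ_ A).hom)
    (psi : V ⊗ A ⟶ A ⊗ V) (hpsi : Measuring A V mu psi) :
    psi ≫ nabla A V eta mu psi = psi := by
  calc psi ≫ nabla A V eta mu psi
      = (ρ_ (V ⊗ A)).inv ≫ ((V ⊗ A) ◁ eta) ≫ (psi ▷ A) ≫ phi A mu psi := by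
        rw [nabla, rightUnitor_inv_naturality_assoc, ← whisker_exchange_assoc]
    _ = (ρ_ (V ⊗ A)).inv ≫ ((V ⊗ A) ◁ eta) ≫ (α_ V A A).hom ≫ (V ◁ mu) ≫ psi := by
        rw [hpsi]
    _ = (V ◁ ((ρ_ A).inv ≫ (A ◁ eta) ≫ mu)) ≫ psi := by
        simp only [MonoidalCategory.whiskerLeft_comp, ← Category.assoc]
        congr 2
        monoidal
    _ = psi := by simp [hunit]

/-- the morphism `∇_{A⊗V}` is idempotent. -/
theorem nabla_idempotent (A V : C) (eta : 𝟙_ C ⟶ A) (mu : A ⊗ A ⟶ A)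
    (hA : IsMon A eta mu) (psi : V ⊗ A ⟶ A ⊗ V) (hpsi : Measuring A V mu psi) :
    nabla A V eta mu psi ≫ nabla A V eta mu psi = nabla A V eta mu psi := by
  obtain ⟨-, hunit, hassoc⟩ := hA
  have hpsi_nabla := psi_comp_nabla A V eta mu hunit psi hpsi
  rw [nabla_eq_tmap] at hpsi_nabla ⊢
  rw [tmap_comp_tmap A mu hassoc, Category.assoc, Category.assoc, hpsi_nabla]

end WeakCrossed
end

section
/- Let A be a monoid in C, V an object of C, and ψ:V⊗A→A⊗V a morphism satisfying the measuring condition. Then the following identities hold: (μ_A⊗V)∘(A⊗ψ)∘(∇_{A⊗V}⊗A)=(μ_A⊗V)∘(A⊗ψ) and (μ_A⊗V)∘(A⊗ψ)=∇_{A⊗V}∘(μ_A⊗V)∘(A⊗ψ). -/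
open CategoryTheory MonoidalCategory

universe v u

namespace WeakCrossed

variable {C : Type u} [Category.{v} C] [MonoidalCategory C]

/-!
Associativity of `μ_A` and the measuring condition together give
`φ ∘ (φ ⊗ A) = φ ∘ (A ⊗ V ⊗ μ_A)` for `φ = (μ_A ⊗ V) ∘ (A ⊗ ψ)`. Feeding `η_A` into the
middle factor, resp. the last factor, and using the unit laws of `A` turns this into the
two identities.
-/

lemma phi_comp (A : C) {X Z X' Z' Y : C} (mu : A ⊗ A ⟶ A) (h : X' ⊗ Z' ⟶ X ⊗ Z)
    (f : X ⊗ Z ⟶ A ⊗ Y) :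
    phi A mu (h ≫ f) = (α_ A X' Z').hom ≫ (A ◁ h) ≫ (α_ A X Z).inv ≫ phi A mu f := by
  simp [phi]

lemma whiskerRight_phi_comp_phi (A : C) {X Z Y W U : C} (mu : A ⊗ A ⟶ A)
    (hassoc : (mu ▷ A) ≫ mu = (α_ A A A).hom ≫ (A ◁ mu) ≫ mu)
    (f : X ⊗ Z ⟶ A ⊗ Y) (g : Y ⊗ W ⟶ A ⊗ U) :
    (phi A mu f ▷ W) ≫ phi A mu g =
      ((α_ A X Z).hom ▷ W) ≫ phi A mu ((f ▷ W) ≫ phi A mu g) := by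
  simp only [phi, comp_whiskerRight, MonoidalCategory.whiskerLeft_comp, Category.assoc]
  slice_lhs 4 5 => rw [associator_naturality_left]
  slice_lhs 5 6 => rw [← whisker_exchange]
  slice_lhs 6 7 => rw [associator_inv_naturality_left]
  slice_lhs 7 8 => rw [← comp_whiskerRight, hassoc, comp_whiskerRight, comp_whiskerRight]
  monoidal

lemma whiskerRight_phi_comp_phi_of_measuring (A V : C) (mu : A ⊗ A ⟶ A)
    (hassoc : (mu ▷ A) ≫ mu = (α_ A A A).hom ≫ (A ◁ mu) ≫ mu)
    (psi : V ⊗ A ⟶ A ⊗ V) (hpsi : Measuring A V mu psi) :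
    (phi A mu psi ▷ A) ≫ phi A mu psi =
      (α_ (A ⊗ V) A A).hom ≫ ((A ⊗ V) ◁ mu) ≫ phi A mu psi := by
  rw [whiskerRight_phi_comp_phi A mu hassoc, hpsi, phi_comp, phi_comp]
  monoidal

lemma whiskerRight_nabla_comp_phi (A V : C) (eta : 𝟙_ C ⟶ A) (mu : A ⊗ A ⟶ A)
    (hA : IsMon A eta mu) (psi : V ⊗ A ⟶ A ⊗ V) (hpsi : Measuring A V mu psi) :
    (nabla A V eta mu psi ▷ A) ≫ phi A mu psi = phi A mu psi := by
  obtain ⟨hl, -, hassoc⟩ := hA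
  calc (nabla A V eta mu psi ▷ A) ≫ phi A mu psi
      = ((A ⊗ V) ◁ ((λ_ A).inv ≫ (eta ▷ A) ≫ mu)) ≫ phi A mu psi := by
        simp only [nabla, comp_whiskerRight, Category.assoc,
          whiskerRight_phi_comp_phi_of_measuring A V mu hassoc psi hpsi]
        monoidal
    _ = phi A mu psi := by simp [hl]

lemma phi_comp_nabla (A V : C) (eta : 𝟙_ C ⟶ A) (mu : A ⊗ A ⟶ A)
    (hA : IsMon A eta mu) (psi : V ⊗ A ⟶ A ⊗ V) (hpsi : Measuring A V mu psi) :
    phi A mu psi ≫ nabla A V eta mu psi = phi A mu psi := by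
  obtain ⟨-, hr, hassoc⟩ := hA
  calc phi A mu psi ≫ nabla A V eta mu psi
      = (ρ_ _).inv ≫ (_ ◁ eta) ≫ (phi A mu psi ▷ A) ≫ phi A mu psi := by
        rw [nabla, rightUnitor_inv_naturality_assoc, ← whisker_exchange_assoc]
    _ = ((A ⊗ V) ◁ ((ρ_ A).inv ≫ (A ◁ eta) ≫ mu)) ≫ phi A mu psi := by
        rw [whiskerRight_phi_comp_phi_of_measuring A V mu hassoc psi hpsi]
        monoidal
    _ = phi A mu psi := by simp [hr]

/-- `(μ_A⊗V)∘(A⊗ψ)∘(∇_{A⊗V}⊗A) = (μ_A⊗V)∘(A⊗ψ) = ∇_{A⊗V}∘(μ_A⊗V)∘(A⊗ψ)`. -/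
theorem phi_nabla (A V : C) (eta : 𝟙_ C ⟶ A) (mu : A ⊗ A ⟶ A)
    (hA : IsMon A eta mu) (psi : V ⊗ A ⟶ A ⊗ V) (hpsi : Measuring A V mu psi) :
    (nabla A V eta mu psi ▷ A) ≫ phi A mu psi = phi A mu psi ∧
      phi A mu psi = phi A mu psi ≫ nabla A V eta mu psi :=
  ⟨whiskerRight_nabla_comp_phi A V eta mu hA psi hpsi,
    (phi_comp_nabla A V eta mu hA psi hpsi).symm⟩

end WeakCrossed
end
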